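/- In the Hahn series field F = HahnSeries ℝ ℝ, for a ∈ F⁺ = {x : x ≠ 0, 0 < leadingCoeff x} and γ ∈ ℝ, the element a / π (vv a) belongs to U⁺, so the tempered power tp a γ = π ((vv a) ^ γ) · (a / π (vv a))^{single 0 γ} is well defined (here (vv a)^γ is the real power Real.rpow, noting 0 < vv a). For all a, b ∈ F⁺ and γ ∈ ℝ: tp (a·b) γ = (tp a γ) · (tp b γ) and vv (tp a γ) = (vv a) ^ γ. -/

import Mathlib

open HahnSeries

/-- The exponential summable family `n ↦ (n!)⁻¹ • bⁿ` of an element `b` of positive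
order in the Hahn series field. -/
noncomputable def expFamily (b : HahnSeries ℝ ℝ) (hb : 0 < b.orderTop) :
    SummableFamily ℝ ℝ ℕ where
  toFun n := ((n.factorial : ℝ))⁻¹ • b ^ n
  isPWO_iUnion_support' := by
    refine (SummableFamily.powers b).isPWO_iUnion_support.mono ?_
    intro g hg
    obtain ⟨n, hn⟩ := Set.mem_iUnion.mp hg
    refine Set.mem_iUnion.mpr ⟨n, ?_⟩
    have hn' : (((n.factorial : ℝ))⁻¹ • b ^ n).coeff g ≠ 0 := hn
    have hbn : (b ^ n).coeff g ≠ 0 := fun h => hn' (by rw [HahnSeries.coeff_smul, h, smul_zero])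
    rwa [SummableFamily.powers_of_orderTop_pos hb n]
  finite_co_support' g := by
    refine ((SummableFamily.powers b).finite_co_support g).subset ?_
    intro n hn
    simp only [Set.mem_setOf_eq] at hn ⊢
    intro h
    apply hn
    rw [HahnSeries.coeff_smul]
    have h' : (b ^ n).coeff g = 0 := by
      simp only [] at h
      rwa [SummableFamily.powers_of_orderTop_pos hb n] at h
    rw [h', smul_zero]

/-- The restricted exponential on the maximal ideal of the valuation ring:
`E b = ∑_{n} (n!)⁻¹ bⁿ` when `0 < orderTop b`, and (junk value) `0` otherwise. -/
noncomputable def E (b : HahnSeries ℝ ℝ) : HahnSeries ℝ ℝ :=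
  if hb : 0 < b.orderTop then (expFamily b hb).hsum else 0

/-- The exponential on the valuation ring `O = {x : 0 ≤ orderTop x}`, combining the
real exponential on the constant term with the restricted exponential `E`. -/
noncomputable def expO (a : HahnSeries ℝ ℝ) : HahnSeries ℝ ℝ :=
  HahnSeries.single (0 : ℝ) (Real.exp (a.coeff 0)) *
    E (a - HahnSeries.single (0 : ℝ) (a.coeff 0))

/-- The logarithm on positive units: the inverse of the bijection `expO : O → U⁺`. -/
noncomputable def logO (x : HahnSeries ℝ ℝ) : HahnSeries ℝ ℝ :=
  Function.invFunOn expO {a : HahnSeries ℝ ℝ | 0 ≤ a.orderTop} x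

/-- The power `b ^ c = expO (c · logO b)` for `b ∈ U⁺` and `c ∈ O`. -/
noncomputable def hpow (b c : HahnSeries ℝ ℝ) : HahnSeries ℝ ℝ :=
  expO (c * logO b)

/-- Membership in the group `U⁺` of positive units of the valuation ring. -/
def memUplus (x : HahnSeries ℝ ℝ) : Prop :=
  x ≠ 0 ∧ x.order = 0 ∧ 0 < x.leadingCoeff

/-- The signed valuation on the Hahn series field `HahnSeries ℝ ℝ`. -/
noncomputable def vv (x : HahnSeries ℝ ℝ) : ℝ :=
  Real.sign x.leadingCoeff * Real.exp (-x.order)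

/-- The diagonal cross-section `π : ℝ^× → HahnSeries ℝ ℝ`. -/
noncomputable def diagPi (a : ℝ) : HahnSeries ℝ ℝ :=
  HahnSeries.single (-Real.log |a|) a

/-- The tempered power `a^γ = π((vv a)^γ) · (a / π(vv a))^{single 0 γ}`, for `a ∈ F⁺`
and `γ ∈ ℝ`, where `(vv a)^γ` is the real power `Real.rpow`. -/
noncomputable def tp (a : HahnSeries ℝ ℝ) (γ : ℝ) : HahnSeries ℝ ℝ :=
  diagPi ((vv a) ^ γ) * hpow (a / diagPi (vv a)) (HahnSeries.single (0 : ℝ) γ)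

/-!
On the maximal ideal `𝔪 = {b | 0 < b.orderTop}`, `E` is evaluation of the power series `exp`
(`PowerSeries.heval`), and evaluation commutes with substitution. The formal identities
`exp ∘ log (1 + X) = 1 + X` and `log (1 + X) ∘ (exp - 1) = X`, both proved by comparing
derivatives and constant terms, make `E` a bijection `𝔪 → 1 + 𝔪`; the binomial theorem makes it
turn sums into products. Splitting off the constant term, `expO` is therefore an isomorphism
`(O, +) ≅ (U⁺, ·)`, so `logO` is additive and `u ↦ u ^ c` is multiplicative on `U⁺`.
For `a ∈ F⁺` the element `π (vv a) = single a.order (vv a)` has the same order as `a`, whence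
`a / π (vv a) ∈ U⁺`; since `vv`, `π` and the real power are multiplicative, so is `tp`, and
`vv (π r * u) = r` for `u ∈ U⁺` gives `vv (tp a γ) = vv a ^ γ`.
-/

open PowerSeries
open Finset.HasAntidiagonal (antidiagonal mem_antidiagonal)
open scoped Nat

theorem finsum_sum_antidiagonal {M : Type*} [AddCommMonoid M] (F : ℕ × ℕ → M)
    (hF : (Function.support F).Finite) :
    ∑ᶠ n, ∑ p ∈ antidiagonal n, F p = ∑ᶠ p, F p := by
  classical
  set S := hF.toFinset
  have hsupp : Function.support (fun n => ∑ p ∈ antidiagonal n, F p) ⊆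
      S.image (fun p => p.1 + p.2) := fun n hn => by
    obtain ⟨p, hp, hFp⟩ := Finset.exists_ne_zero_of_sum_ne_zero hn
    exact Finset.mem_image.mpr ⟨p, hF.mem_toFinset.mpr hFp, mem_antidiagonal.mp hp⟩
  rw [finsum_eq_sum_of_support_subset _ hsupp, finsum_eq_sum F hF,
    ← Finset.sum_fiberwise_of_maps_to fun p hp =>
      Finset.mem_image_of_mem (fun p : ℕ × ℕ => p.1 + p.2) hp]
  refine Finset.sum_congr rfl fun n _ => ?_
  rw [← Finset.sum_filter_of_ne (p := (· ∈ S)) fun p _ h => hF.mem_toFinset.mpr h]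
  congr 1
  ext p
  simp [S, mem_antidiagonal, and_comm]

theorem inv_factorial_mul_choose {i j : ℕ} :
    ((i + j) ! : ℝ)⁻¹ * (i + j).choose i = (i ! : ℝ)⁻¹ * (j ! : ℝ)⁻¹ := by
  rw [Nat.cast_add_choose]
  field_simp

theorem HahnSeries.orderTop_pos_of_nonneg_of_coeff_zero {Γ R : Type*} [LinearOrder Γ] [Zero Γ]
    [Zero R] {x : HahnSeries Γ R} (h : 0 ≤ x.orderTop) (h0 : x.coeff 0 = 0) :
    0 < x.orderTop :=
  h.lt_of_ne fun h' => coeff_orderTop_ne h'.symm h0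

namespace PowerSeries

section Subst

variable {R : Type*} [CommRing R]

theorem coeff_pow_eq_zero_of_lt {g : PowerSeries R} (hg : constantCoeff g = 0)
    {d e : ℕ} (h : e < d) : coeff e (g ^ d) = 0 :=
  X_pow_dvd_iff.mp (pow_dvd_pow_of_dvd (X_dvd_iff.mpr hg) d) e h

theorem constantCoeff_subst_of_constantCoeff_eq_zero {f g : PowerSeries R}
    (hg : constantCoeff g = 0) : constantCoeff (f.subst g) = constantCoeff f := by
  rw [← coeff_zero_eq_constantCoeff_apply, coeff_subst' (HasSubst.of_constantCoeff_zero' hg),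
    finsum_eq_single _ 0 fun d hd => by
      rw [coeff_pow_eq_zero_of_lt hg (Nat.pos_of_ne_zero hd), smul_zero]]
  simp

end Subst

section HEval

variable {Γ R : Type*} [AddCommMonoid Γ] [LinearOrder Γ] [IsOrderedCancelAddMonoid Γ]
  [CommRing R]

theorem coeff_heval_of_orderTop_pos {x : HahnSeries Γ R} (hx : 0 < x.orderTop)
    (f : PowerSeries R) (g : Γ) :
    (heval x f).coeff g = ∑ᶠ n, coeff n f * (x ^ n).coeff g := by
  simp [hx]

theorem orderTop_heval_nonneg (x : HahnSeries Γ R) (f : PowerSeries R) :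
    0 ≤ (heval x f).orderTop := by
  refine le_orderTop_iff_forall.mpr fun g hg => ?_
  by_cases hx : 0 < x.orderTop
  · rw [coeff_heval_of_orderTop_pos hx]
    refine finsum_eq_zero_of_forall_eq_zero fun n => ?_
    have : 0 ≤ (x ^ n).orderTop := (nsmul_nonneg hx.le n).trans orderTop_nsmul_le_orderTop_pow
    rw [coeff_eq_zero_of_lt_orderTop (hg.trans_le this), mul_zero]
  · rw [heval_apply, SummableFamily.powerSeriesFamily_of_not_orderTop_pos hx,
      SummableFamily.powerSeriesFamily_hsum_zero]
    simp [(WithTop.coe_lt_coe.mp hg).ne]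

theorem orderTop_heval_pos {x : HahnSeries Γ R} (hx : 0 < x.orderTop)
    {f : PowerSeries R} (hf : constantCoeff f = 0) : 0 < (heval x f).orderTop := by
  obtain ⟨g, rfl⟩ := X_dvd_iff.mpr hf
  rw [map_mul, heval_X x hx]
  exact hx.trans_le <|
    (le_add_of_nonneg_right (orderTop_heval_nonneg x g)).trans orderTop_add_le_mul

theorem coeff_heval_eq_sum {x : HahnSeries Γ R} (hx : 0 < x.orderTop)
    (f : PowerSeries R) {g : Γ} {s : Finset ℕ} (hs : ∀ n ∉ s, (x ^ n).coeff g = 0) :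
    (heval x f).coeff g = ∑ n ∈ s, coeff n f * (x ^ n).coeff g := by
  rw [coeff_heval_of_orderTop_pos hx]
  refine finsum_eq_sum_of_support_subset _ fun n hn => ?_
  by_contra h
  exact hn (by dsimp only; rw [hs n h, mul_zero])

theorem heval_subst {x : HahnSeries Γ R} (hx : 0 < x.orderTop) (f : PowerSeries R)
    {g : PowerSeries R} (hg : constantCoeff g = 0) :
    heval x (f.subst g) = heval (heval x g) f := by
  ext γ
  classical
  set N := (SummableFamily.pow_finite_co_support hx γ).toFinset
  have hN : ∀ n ∉ N, (x ^ n).coeff γ = 0 := fun n hn => by simpa [N] using hn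
  set M := N.sup id + 1
  have hNM : ∀ e ∈ N, e < M := fun e he => Nat.lt_succ_of_le (Finset.le_sup (f := id) he)
  have hpow : ∀ d, ((heval x g) ^ d).coeff γ = ∑ e ∈ N, coeff e (g ^ d) * (x ^ e).coeff γ :=
    fun d => by rw [← map_pow, coeff_heval_eq_sum hx _ hN]
  have hsubst : ∀ e ∈ N,
      coeff e (f.subst g) = ∑ d ∈ Finset.range M, coeff d f * coeff e (g ^ d) := by
    intro e he
    rw [coeff_subst' (HasSubst.of_constantCoeff_zero' hg)]
    refine finsum_eq_sum_of_support_subset _ fun d hd => ?_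
    by_contra h
    have hed : e < d := (hNM e he).trans_le (not_lt.mp (Finset.mem_range.not.mp h))
    exact hd (by simp [coeff_pow_eq_zero_of_lt hg hed])
  have hsupp : Function.support (fun d => coeff d f * ((heval x g) ^ d).coeff γ) ⊆
      Finset.range M := fun d hd => by
    by_contra h
    refine hd ?_
    dsimp only
    rw [hpow, Finset.sum_eq_zero fun e he => ?_, mul_zero]
    rw [coeff_pow_eq_zero_of_lt hg ((hNM e he).trans_le (not_lt.mp (Finset.mem_range.not.mp h))),
      zero_mul]
  rw [coeff_heval_eq_sum hx _ hN, coeff_heval_of_orderTop_pos (orderTop_heval_pos hx hg),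
    finsum_eq_sum_of_support_subset _ hsupp, Finset.sum_congr rfl fun e he => by rw [hsubst e he]]
  simp_rw [hpow, Finset.sum_mul, Finset.mul_sum]
  rw [Finset.sum_comm]
  exact Finset.sum_congr rfl fun _ _ => Finset.sum_congr rfl fun _ _ => by ring

end HEval

section ExpLog

variable {A : Type*} [CommRing A] [Algebra ℚ A]

theorem one_add_X_mul_derivative_log : (1 + X) * d⁄dX A (log A) = 1 := by
  ext n
  rw [deriv_log, add_mul, one_mul, map_add]
  cases n with
  | zero => simp
  | succ n => simp [pow_succ]

variable [IsAddTorsionFree A]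

theorem exp_subst_log : (exp A).subst (log A) = 1 + X := by
  set u := d⁄dX A (log A)
  set B := (exp A).subst (log A)
  have hu : (1 + X) * u = 1 := one_add_X_mul_derivative_log
  have hu' : d⁄dX A u = -(u * u) := by
    have h := congrArg (d⁄dX A) hu
    simp only [Derivation.leibniz, map_add, derivative_X, derivative_one, smul_eq_mul, zero_add,
      mul_one] at h
    linear_combination u * h - (d⁄dX A u) * hu
  have hB : d⁄dX A B = B * u := by
    rw [derivative_subst HasSubst.log, derivative_exp]
  have hBu : B * u = 1 := by
    refine derivative.ext ?_ ?_
    · rw [Derivation.leibniz, hB, hu', derivative_one, smul_eq_mul, smul_eq_mul]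
      ring
    · rw [map_mul, constantCoeff_subst_of_constantCoeff_eq_zero constantCoeff_log]
      simp [u, deriv_log]
  linear_combination (1 + X) * hBu - B * hu

theorem log_subst_exp_sub_one : (log A).subst (exp A - 1) = X := by
  have hsub : HasSubst (exp A - 1) := HasSubst.exp_sub_one
  have hinv : exp A * (d⁄dX A (log A)).subst (exp A - 1) = 1 := by
    have := congrArg (substAlgHom hsub) (one_add_X_mul_derivative_log (A := A))
    rwa [map_mul, map_add, map_one, coe_substAlgHom, subst_X hsub, add_sub_cancel] at this
  refine derivative.ext ?_ ?_
  · rw [derivative_subst hsub, map_sub, derivative_exp, derivative_one, sub_zero, derivative_X,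
      mul_comm, hinv]
  · rw [constantCoeff_subst_of_constantCoeff_eq_zero (by simp), constantCoeff_log,
      constantCoeff_X]

end ExpLog

end PowerSeries

section Exponential

theorem E_eq_heval_exp {b : HahnSeries ℝ ℝ} (hb : 0 < b.orderTop) :
    E b = heval b (exp ℝ) := by
  rw [E, dif_pos hb, heval_apply]
  congr 1
  ext1 n
  simp [expFamily, hb, coeff_exp]

theorem orderTop_E_sub_one_pos {b : HahnSeries ℝ ℝ} (hb : 0 < b.orderTop) :
    0 < (E b - 1).orderTop := by
  rw [E_eq_heval_exp hb, ← map_one (heval b), ← map_sub]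
  exact orderTop_heval_pos hb (by simp)

theorem E_heval_log {t : HahnSeries ℝ ℝ} (ht : 0 < t.orderTop) :
    E (heval t (log ℝ)) = 1 + t := by
  rw [E_eq_heval_exp (orderTop_heval_pos ht constantCoeff_log),
    ← heval_subst ht _ constantCoeff_log, exp_subst_log, map_add, map_one, heval_X _ ht]

theorem heval_log_E_sub_one {b : HahnSeries ℝ ℝ} (hb : 0 < b.orderTop) :
    heval (E b - 1) (log ℝ) = b := by
  rw [E_eq_heval_exp hb, ← map_one (heval b), ← map_sub, ← heval_subst hb _ (by simp),
    log_subst_exp_sub_one, heval_X _ hb]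

theorem E_injOn : Set.InjOn E {b : HahnSeries ℝ ℝ | 0 < b.orderTop} := fun x hx y hy h => by
  rw [← heval_log_E_sub_one hx, h, heval_log_E_sub_one hy]

theorem expFamily_add_apply {x y : HahnSeries ℝ ℝ} (hx : 0 < x.orderTop) (hy : 0 < y.orderTop)
    (hxy : 0 < (x + y).orderTop) (n : ℕ) :
    expFamily (x + y) hxy n = ∑ p ∈ antidiagonal n, expFamily x hx p.1 * expFamily y hy p.2 := by
  change (n ! : ℝ)⁻¹ • (x + y) ^ n =
    ∑ p ∈ antidiagonal n, ((p.1 ! : ℝ)⁻¹ • x ^ p.1) * ((p.2 ! : ℝ)⁻¹ • y ^ p.2)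
  -- `ℝ⟦ℝ⟧` has no `IsScalarTower ℝ ℝ⟦ℝ⟧ ℝ⟦ℝ⟧` for this `•`, so trade it for multiplication by `C r`
  simp only [← C_mul_eq_smul]
  rw [(Commute.all x y).add_pow', Finset.mul_sum]
  refine Finset.sum_congr rfl fun p hp => ?_
  obtain rfl := mem_antidiagonal.mp hp
  rw [nsmul_eq_mul, ← map_natCast HahnSeries.C, ← mul_assoc, ← map_mul, inv_factorial_mul_choose,
    map_mul]
  ring

theorem E_add {x y : HahnSeries ℝ ℝ} (hx : 0 < x.orderTop) (hy : 0 < y.orderTop) :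
    E (x + y) = E x * E y := by
  have hxy : 0 < (x + y).orderTop := (lt_min hx hy).trans_le min_orderTop_le_orderTop_add
  rw [E, dif_pos hxy, E, dif_pos hx, E, dif_pos hy, ← SummableFamily.hsum_mul]
  ext γ
  rw [SummableFamily.coeff_hsum, SummableFamily.coeff_hsum,
    ← finsum_sum_antidiagonal _ (SummableFamily.finite_co_support _ γ)]
  exact finsum_congr fun n => by rw [expFamily_add_apply hx hy, coeff_sum]; rfl

end Exponential

section ValuationRing

theorem orderTop_sub_single_coeff_zero_pos {a : HahnSeries ℝ ℝ} (ha : 0 ≤ a.orderTop) :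
    0 < (a - single 0 (a.coeff 0)).orderTop :=
  orderTop_pos_of_nonneg_of_coeff_zero
    ((le_min ha orderTop_single_le).trans min_orderTop_le_orderTop_sub) (by simp)

theorem memUplus_iff {u : HahnSeries ℝ ℝ} :
    memUplus u ↔ u.orderTop = 0 ∧ 0 < u.leadingCoeff := by
  refine ⟨fun ⟨hu, ho, hc⟩ => ⟨by rw [← order_eq_orderTop_of_ne_zero hu, ho]; rfl, hc⟩,
    fun ⟨ho, hc⟩ => ?_⟩
  have hu : u ≠ 0 := leadingCoeff_eq_zero.not.mp hc.ne'
  refine ⟨hu, ?_, hc⟩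
  rw [← order_eq_orderTop_of_ne_zero hu] at ho
  exact_mod_cast ho

theorem memUplus_mul {u v : HahnSeries ℝ ℝ} (hu : memUplus u) (hv : memUplus v) :
    memUplus (u * v) := by
  rw [memUplus_iff] at *
  rw [orderTop_mul, leadingCoeff_mul, hu.1, hv.1, add_zero]
  exact ⟨rfl, mul_pos hu.2 hv.2⟩

theorem memUplus_expO {a : HahnSeries ℝ ℝ} (ha : 0 ≤ a.orderTop) : memUplus (expO a) := by
  have hE := (orderTop_self_sub_one_pos_iff _).mp
    (orderTop_E_sub_one_pos (orderTop_sub_single_coeff_zero_pos ha))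
  rw [memUplus_iff, expO, orderTop_mul, leadingCoeff_mul, hE.1, hE.2,
    orderTop_single (Real.exp_pos _).ne', leadingCoeff_of_single, mul_one]
  exact ⟨by simp, Real.exp_pos _⟩

theorem expO_add {a b : HahnSeries ℝ ℝ} (ha : 0 ≤ a.orderTop) (hb : 0 ≤ b.orderTop) :
    expO (a + b) = expO a * expO b := by
  have hsplit : a + b - single 0 ((a + b).coeff 0) =
      (a - single 0 (a.coeff 0)) + (b - single 0 (b.coeff 0)) := by
    rw [coeff_add, single_add]
    abel
  rw [expO, expO, expO, hsplit, E_add (orderTop_sub_single_coeff_zero_pos ha)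
    (orderTop_sub_single_coeff_zero_pos hb), coeff_add, Real.exp_add, mul_mul_mul_comm,
    single_mul_single, zero_add]

theorem coeff_zero_expO {a : HahnSeries ℝ ℝ} (ha : 0 ≤ a.orderTop) :
    (expO a).coeff 0 = Real.exp (a.coeff 0) := by
  have h := coeff_eq_zero_of_lt_orderTop
    (orderTop_E_sub_one_pos (orderTop_sub_single_coeff_zero_pos ha))
  rw [coeff_sub, HahnSeries.coeff_one, if_pos rfl, sub_eq_zero] at h
  rw [expO, coeff_single_zero_mul, h, mul_one]

theorem expO_injOn : Set.InjOn expO {a : HahnSeries ℝ ℝ | 0 ≤ a.orderTop} := by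
  intro a ha b hb h
  have h0 : a.coeff 0 = b.coeff 0 := by
    simpa [coeff_zero_expO ha, coeff_zero_expO hb] using congrArg (HahnSeries.coeff · 0) h
  rw [expO, expO, h0] at h
  have hE := E_injOn (orderTop_sub_single_coeff_zero_pos ha)
    (orderTop_sub_single_coeff_zero_pos hb)
    (mul_left_cancel₀ (single_ne_zero (Real.exp_pos _).ne') (by rwa [h0]))
  rwa [h0, sub_left_inj] at hE

theorem exists_expO_eq_of_memUplus {u : HahnSeries ℝ ℝ} (hu : memUplus u) :
    ∃ a, 0 ≤ a.orderTop ∧ expO a = u := by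
  rw [memUplus_iff] at hu
  set c := u.leadingCoeff
  set w := single 0 c⁻¹ * u
  have hw : 0 < (w - 1).orderTop := by
    refine (orderTop_self_sub_one_pos_iff w).mpr ⟨?_, ?_⟩
    · rw [orderTop_mul, orderTop_single (inv_ne_zero hu.2.ne'), hu.1, add_zero, WithTop.coe_zero]
    · rw [leadingCoeff_mul, leadingCoeff_of_single, inv_mul_cancel₀ hu.2.ne']
  set s := heval (w - 1) (log ℝ)
  have hs : 0 < s.orderTop := orderTop_heval_pos hw constantCoeff_log
  refine ⟨single 0 (Real.log c) + s,
    (le_min orderTop_single_le hs.le).trans min_orderTop_le_orderTop_add, ?_⟩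
  have h0 : (single 0 (Real.log c) + s).coeff 0 = Real.log c := by
    simp [coeff_eq_zero_of_lt_orderTop hs]
  rw [expO, h0, add_sub_cancel_left, E_heval_log hw, add_sub_cancel, Real.exp_log hu.2,
    ← mul_assoc, single_mul_single, mul_inv_cancel₀ hu.2.ne', add_zero, single_zero_one, one_mul]

theorem orderTop_logO_nonneg {u : HahnSeries ℝ ℝ} (hu : memUplus u) : 0 ≤ (logO u).orderTop :=
  Function.invFunOn_mem (exists_expO_eq_of_memUplus hu)

theorem expO_logO {u : HahnSeries ℝ ℝ} (hu : memUplus u) : expO (logO u) = u :=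
  Function.invFunOn_eq (exists_expO_eq_of_memUplus hu)

theorem logO_mul {u v : HahnSeries ℝ ℝ} (hu : memUplus u) (hv : memUplus v) :
    logO (u * v) = logO u + logO v :=
  expO_injOn (orderTop_logO_nonneg (memUplus_mul hu hv))
    ((le_min (orderTop_logO_nonneg hu) (orderTop_logO_nonneg hv)).trans
      min_orderTop_le_orderTop_add)
    (by rw [expO_logO (memUplus_mul hu hv), expO_add (orderTop_logO_nonneg hu)
      (orderTop_logO_nonneg hv), expO_logO hu, expO_logO hv])

theorem orderTop_mul_logO_nonneg {u c : HahnSeries ℝ ℝ} (hu : memUplus u)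
    (hc : 0 ≤ c.orderTop) : 0 ≤ (c * logO u).orderTop :=
  (add_nonneg hc (orderTop_logO_nonneg hu)).trans orderTop_add_le_mul

theorem memUplus_hpow {u c : HahnSeries ℝ ℝ} (hu : memUplus u) (hc : 0 ≤ c.orderTop) :
    memUplus (hpow u c) :=
  memUplus_expO (orderTop_mul_logO_nonneg hu hc)

theorem hpow_mul {u v c : HahnSeries ℝ ℝ} (hu : memUplus u) (hv : memUplus v)
    (hc : 0 ≤ c.orderTop) : hpow (u * v) c = hpow u c * hpow v c := by
  rw [hpow, hpow, hpow, logO_mul hu hv, mul_add,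
    expO_add (orderTop_mul_logO_nonneg hu hc) (orderTop_mul_logO_nonneg hv hc)]

end ValuationRing

section TemperedPower

theorem vv_of_leadingCoeff_pos {a : HahnSeries ℝ ℝ} (h : 0 < a.leadingCoeff) :
    vv a = Real.exp (-a.order) := by
  rw [vv, Real.sign_of_pos h, one_mul]

theorem vv_pos {a : HahnSeries ℝ ℝ} (h : 0 < a.leadingCoeff) : 0 < vv a := by
  rw [vv_of_leadingCoeff_pos h]
  exact Real.exp_pos _

theorem vv_mul {a b : HahnSeries ℝ ℝ} (ha : 0 < a.leadingCoeff) (hb : 0 < b.leadingCoeff) :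
    vv (a * b) = vv a * vv b := by
  have hab : 0 < (a * b).leadingCoeff := by
    rw [leadingCoeff_mul]
    exact mul_pos ha hb
  rw [vv_of_leadingCoeff_pos hab, vv_of_leadingCoeff_pos ha, vv_of_leadingCoeff_pos hb,
    order_mul (leadingCoeff_eq_zero.not.mp ha.ne') (leadingCoeff_eq_zero.not.mp hb.ne'),
    neg_add, Real.exp_add]

theorem diagPi_of_pos {r : ℝ} (hr : 0 < r) : diagPi r = single (-Real.log r) r := by
  rw [diagPi, abs_of_pos hr]

theorem diagPi_mul {r s : ℝ} (hr : 0 < r) (hs : 0 < s) :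
    diagPi (r * s) = diagPi r * diagPi s := by
  rw [diagPi_of_pos (mul_pos hr hs), diagPi_of_pos hr, diagPi_of_pos hs, single_mul_single,
    Real.log_mul hr.ne' hs.ne', neg_add]

theorem diagPi_vv {a : HahnSeries ℝ ℝ} (h : 0 < a.leadingCoeff) :
    diagPi (vv a) = single a.order (vv a) := by
  rw [diagPi_of_pos (vv_pos h), vv_of_leadingCoeff_pos h, Real.log_exp, neg_neg]

theorem memUplus_div_diagPi_vv {a : HahnSeries ℝ ℝ} (h : 0 < a.leadingCoeff) :
    memUplus (a / diagPi (vv a)) := by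
  have ha : a ≠ 0 := leadingCoeff_eq_zero.not.mp h.ne'
  rw [memUplus_iff, diagPi_vv h, div_eq_mul_inv, inv_single, orderTop_mul, leadingCoeff_mul,
    orderTop_single (inv_ne_zero (vv_pos h).ne'), leadingCoeff_of_single,
    ← order_eq_orderTop_of_ne_zero ha, ← WithTop.coe_add, add_neg_cancel]
  exact ⟨rfl, mul_pos h (inv_pos.mpr (vv_pos h))⟩

theorem vv_diagPi_mul {r : ℝ} (hr : 0 < r) {u : HahnSeries ℝ ℝ} (hu : memUplus u) :
    vv (diagPi r * u) = r := by
  obtain ⟨hu0, ho, hc⟩ := hu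
  have hlc : 0 < (single (-Real.log r) r * u).leadingCoeff := by
    rw [leadingCoeff_mul, leadingCoeff_of_single]
    exact mul_pos hr hc
  rw [diagPi_of_pos hr, vv_of_leadingCoeff_pos hlc, order_mul (single_ne_zero hr.ne') hu0,
    order_single hr.ne', ho, add_zero, neg_neg, Real.exp_log hr]

theorem vv_tp {a : HahnSeries ℝ ℝ} (h : 0 < a.leadingCoeff) (γ : ℝ) :
    vv (tp a γ) = vv a ^ γ :=
  vv_diagPi_mul (Real.rpow_pos_of_pos (vv_pos h) γ)
    (memUplus_hpow (memUplus_div_diagPi_vv h) orderTop_single_le)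

theorem tp_mul {a b : HahnSeries ℝ ℝ} (ha : 0 < a.leadingCoeff) (hb : 0 < b.leadingCoeff)
    (γ : ℝ) : tp (a * b) γ = tp a γ * tp b γ := by
  have hsplit : a * b / diagPi (vv (a * b)) = a / diagPi (vv a) * (b / diagPi (vv b)) := by
    rw [vv_mul ha hb, diagPi_mul (vv_pos ha) (vv_pos hb), div_mul_div_comm]
  rw [tp, tp, tp, hsplit, hpow_mul (memUplus_div_diagPi_vv ha) (memUplus_div_diagPi_vv hb)
    orderTop_single_le, vv_mul ha hb, Real.mul_rpow (vv_pos ha).le (vv_pos hb).le,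
    diagPi_mul (Real.rpow_pos_of_pos (vv_pos ha) γ) (Real.rpow_pos_of_pos (vv_pos hb) γ),
    mul_mul_mul_comm]

end TemperedPower

theorem stmt_12 :
    -- for `a ∈ F⁺`, the element `a / π (vv a)` lies in `U⁺`,
    -- so the tempered power `tp` is well defined
    (∀ a : HahnSeries ℝ ℝ, a ≠ 0 → 0 < a.leadingCoeff →
      memUplus (a / diagPi (vv a))) ∧
    -- `tp` is multiplicative in the base and `vv (tp a γ) = (vv a) ^ γ`
    (∀ a b : HahnSeries ℝ ℝ, a ≠ 0 → 0 < a.leadingCoeff →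
      b ≠ 0 → 0 < b.leadingCoeff → ∀ γ : ℝ,
      tp (a * b) γ = tp a γ * tp b γ ∧ vv (tp a γ) = (vv a) ^ γ) := by
  exact ⟨fun _ _ h => memUplus_div_diagPi_vv h,
    fun _ _ _ ha _ hb γ => ⟨tp_mul ha hb γ, vv_tp ha γ⟩⟩
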